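/- arXiv:2506.19250 — 3 statements merged into one kernel-verified Lean document; each statement's English description precedes it below -/
import Mathlib

section
/- Let S and A be finite nonempty sets, let γ ∈ [0,1), let R_max ≥ 0, let r : S × A → ℝ satisfy 0 ≤ r(s,a) ≤ R_max for all (s,a), and let P : S × A → S → ℝ satisfy P(s'|s,a) ≥ 0 and ∑_{s'} P(s'|s,a) = 1 for all (s,a). Let π₁, π₂ : S → A → ℝ be stochastic policies (π_i(a|s) ≥ 0 and ∑_a π_i(a|s) = 1 for every s), and suppose there is δ ≥ 0 with ∑_a |π₁(a|s) − π₂(a|s)| ≤ δ for every state s. Let V₁, V₂ : S → ℝ satisfy the Bellman equations V_i(s) = ∑_a π_i(a|s) ( r(s,a) + γ ∑_{s'} P(s'|s,a) V_i(s') ) for all s. Then for every state s, V₁(s) − V₂(s) ≤ δ · R_max / (1 − γ)². -/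
/-!
Both value functions are fixed points of contractions of modulus `γ`, so a bound of the form
`f s ≤ c + γ · max f` for every state forces `max f ≤ c / (1 - γ)`. Applied to `V₂` and `-V₂`
this puts `V₂`, hence every action value `Q₂(s,a) = r(s,a) + γ ∑ P(s'|s,a) V₂(s')`, in
`[0, R_max / (1 - γ)]`. The difference `D = V₁ - V₂` splits as
`D(s) = ∑ₐ (π₁ - π₂)(a|s) Q₂(s,a) + γ ∑ₐ π₁(a|s) ∑ P(s'|s,a) D(s')`, whose first term is at most
`δ R_max / (1 - γ)`; the contraction bound with `c = δ R_max / (1 - γ)` gives the claim.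
-/

open Finset

section WeightedSums

variable {ι 𝕜 : Type*} [Fintype ι] [CommRing 𝕜] [LinearOrder 𝕜] [IsStrictOrderedRing 𝕜]

theorem sum_mul_le_of_mem_stdSimplex {w f : ι → 𝕜} {c : 𝕜} (hw : w ∈ stdSimplex 𝕜 ι)
    (hf : ∀ i, f i ≤ c) : ∑ i, w i * f i ≤ c :=
  calc ∑ i, w i * f i ≤ ∑ i, w i * c :=
        sum_le_sum fun i _ => mul_le_mul_of_nonneg_left (hf i) (hw.1 i)
    _ = c := by rw [← sum_mul, hw.2, one_mul]

theorem le_sum_mul_of_mem_stdSimplex {w f : ι → 𝕜} {c : 𝕜} (hw : w ∈ stdSimplex 𝕜 ι)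
    (hf : ∀ i, c ≤ f i) : c ≤ ∑ i, w i * f i :=
  calc c = ∑ i, w i * c := by rw [← sum_mul, hw.2, one_mul]
    _ ≤ ∑ i, w i * f i := sum_le_sum fun i _ => mul_le_mul_of_nonneg_left (hf i) (hw.1 i)

theorem sum_sub_mul_le_sum_abs_sub_mul {p p' q : ι → 𝕜} {K : 𝕜} (hq0 : ∀ i, 0 ≤ q i)
    (hqK : ∀ i, q i ≤ K) : ∑ i, (p i - p' i) * q i ≤ (∑ i, |p i - p' i|) * K := by
  rw [sum_mul]
  refine sum_le_sum fun i _ => ?_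
  calc (p i - p' i) * q i ≤ |p i - p' i| * q i :=
        mul_le_mul_of_nonneg_right (le_abs_self _) (hq0 i)
    _ ≤ |p i - p' i| * K := mul_le_mul_of_nonneg_left (hqK i) (abs_nonneg _)

end WeightedSums

section Contraction

variable {S 𝕜 : Type*} [Finite S] [Field 𝕜] [LinearOrder 𝕜] [IsStrictOrderedRing 𝕜]

theorem le_div_one_sub_of_forall_le_add_mul {f : S → 𝕜} {c γ : 𝕜} (hγ : γ < 1)
    (h : ∀ M, (∀ s, f s ≤ M) → ∀ s, f s ≤ c + γ * M) (s : S) : f s ≤ c / (1 - γ) := by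
  have : Nonempty S := ⟨s⟩
  obtain ⟨s₀, hs₀⟩ := Finite.exists_max f
  have hfix : f s₀ ≤ c + γ * f s₀ := h _ hs₀ s₀
  rw [le_div_iff₀ (sub_pos.2 hγ)]
  nlinarith [hs₀ s]

theorem div_one_sub_le_of_forall_add_mul_le {f : S → 𝕜} {c γ : 𝕜} (hγ : γ < 1)
    (h : ∀ m, (∀ s, m ≤ f s) → ∀ s, c + γ * m ≤ f s) (s : S) : c / (1 - γ) ≤ f s := by
  have := le_div_one_sub_of_forall_le_add_mul (f := fun s => -f s) (c := -c) hγ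
    (fun M hM s => by linarith [h (-M) (fun s => by linarith [hM s]) s]) s
  rw [neg_div] at this
  linarith

end Contraction

section ValueFunction

variable {S A : Type*} [Fintype S] {γ : ℝ} {r : S → A → ℝ} {P : S → A → S → ℝ}

def qValue (γ : ℝ) (r : S → A → ℝ) (P : S → A → S → ℝ) (V : S → ℝ) (s : S) (a : A) : ℝ :=
  r s a + γ * ∑ s', P s a s' * V s'

theorem qValue_le {V : S → ℝ} {M : ℝ} {s : S} {a : A} (hγ : 0 ≤ γ)
    (hP : P s a ∈ stdSimplex ℝ S) (hV : ∀ s', V s' ≤ M) :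
    qValue γ r P V s a ≤ r s a + γ * M :=
  add_le_add_right (mul_le_mul_of_nonneg_left (sum_mul_le_of_mem_stdSimplex hP hV) hγ) _

theorem le_qValue {V : S → ℝ} {m : ℝ} {s : S} {a : A} (hγ : 0 ≤ γ)
    (hP : P s a ∈ stdSimplex ℝ S) (hV : ∀ s', m ≤ V s') :
    r s a + γ * m ≤ qValue γ r P V s a :=
  add_le_add_right (mul_le_mul_of_nonneg_left (le_sum_mul_of_mem_stdSimplex hP hV) hγ) _

theorem qValue_sub_qValue (V₁ V₂ : S → ℝ) (s : S) (a : A) :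
    qValue γ r P V₁ s a - qValue γ r P V₂ s a = γ * ∑ s', P s a s' * (V₁ s' - V₂ s') := by
  simp only [qValue, mul_sub, sum_sub_distrib]
  ring

variable [Fintype A]

def IsValueFunction (γ : ℝ) (r : S → A → ℝ) (P : S → A → S → ℝ) (π : S → A → ℝ)
    (V : S → ℝ) : Prop :=
  ∀ s, V s = ∑ a, π s a * qValue γ r P V s a

namespace IsValueFunction

variable {π π₁ π₂ : S → A → ℝ} {V V₁ V₂ : S → ℝ}

theorem le_div_one_sub (hV : IsValueFunction γ r P π V) (hγ0 : 0 ≤ γ) (hγ1 : γ < 1)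
    (hP : ∀ s a, P s a ∈ stdSimplex ℝ S) (hπ : ∀ s, π s ∈ stdSimplex ℝ A) {Rmax : ℝ}
    (hr : ∀ s a, r s a ≤ Rmax) : ∀ s, V s ≤ Rmax / (1 - γ) :=
  le_div_one_sub_of_forall_le_add_mul hγ1 fun _ hM s => (hV s).trans_le <|
    sum_mul_le_of_mem_stdSimplex (hπ s) fun a =>
      (qValue_le hγ0 (hP s a) hM).trans (add_le_add_left (hr s a) _)

theorem div_one_sub_le (hV : IsValueFunction γ r P π V) (hγ0 : 0 ≤ γ) (hγ1 : γ < 1)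
    (hP : ∀ s a, P s a ∈ stdSimplex ℝ S) (hπ : ∀ s, π s ∈ stdSimplex ℝ A) {Rmin : ℝ}
    (hr : ∀ s a, Rmin ≤ r s a) : ∀ s, Rmin / (1 - γ) ≤ V s :=
  div_one_sub_le_of_forall_add_mul_le hγ1 fun _ hm s =>
    (le_sum_mul_of_mem_stdSimplex (hπ s) fun a =>
      (add_le_add_left (hr s a) _).trans (le_qValue hγ0 (hP s a) hm)).trans_eq (hV s).symm

theorem qValue_mem_Icc (hV : IsValueFunction γ r P π V) (hγ0 : 0 ≤ γ) (hγ1 : γ < 1)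
    (hP : ∀ s a, P s a ∈ stdSimplex ℝ S) (hπ : ∀ s, π s ∈ stdSimplex ℝ A) {Rmax : ℝ}
    (hr0 : ∀ s a, 0 ≤ r s a) (hr1 : ∀ s a, r s a ≤ Rmax) (s : S) (a : A) :
    qValue γ r P V s a ∈ Set.Icc 0 (Rmax / (1 - γ)) := by
  have hV0 : ∀ s, 0 ≤ V s := by simpa using hV.div_one_sub_le hγ0 hγ1 hP hπ hr0
  have hfix : Rmax + γ * (Rmax / (1 - γ)) = Rmax / (1 - γ) := by
    field_simp [(sub_pos.2 hγ1).ne']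
    ring
  constructor
  · linarith [le_qValue (r := r) hγ0 (hP s a) hV0, hr0 s a]
  · linarith [qValue_le (r := r) hγ0 (hP s a) (hV.le_div_one_sub hγ0 hγ1 hP hπ hr1), hr1 s a]

theorem sub_eq (h₁ : IsValueFunction γ r P π₁ V₁) (h₂ : IsValueFunction γ r P π₂ V₂) (s : S) :
    V₁ s - V₂ s = ∑ a, (π₁ s a - π₂ s a) * qValue γ r P V₂ s a +
      ∑ a, π₁ s a * (qValue γ r P V₁ s a - qValue γ r P V₂ s a) := by
  rw [h₁ s, h₂ s]
  simp only [sub_mul, mul_sub, sum_sub_distrib]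
  ring

theorem sub_le_add_mul (h₁ : IsValueFunction γ r P π₁ V₁) (h₂ : IsValueFunction γ r P π₂ V₂)
    (hγ : 0 ≤ γ) (hP : ∀ s a, P s a ∈ stdSimplex ℝ S) (hπ₁ : ∀ s, π₁ s ∈ stdSimplex ℝ A)
    {K δ M : ℝ} (hQ₂ : ∀ s a, qValue γ r P V₂ s a ∈ Set.Icc 0 K) (hK : 0 ≤ K)
    (hclose : ∀ s, ∑ a, |π₁ s a - π₂ s a| ≤ δ) (hM : ∀ s, V₁ s - V₂ s ≤ M) (s : S) :
    V₁ s - V₂ s ≤ δ * K + γ * M := by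
  rw [h₁.sub_eq h₂ s]
  gcongr ?_ + ?_
  · calc _ ≤ (∑ a, |π₁ s a - π₂ s a|) * K :=
          sum_sub_mul_le_sum_abs_sub_mul (fun a => (hQ₂ s a).1) (fun a => (hQ₂ s a).2)
      _ ≤ δ * K := mul_le_mul_of_nonneg_right (hclose s) hK
  · refine sum_mul_le_of_mem_stdSimplex (hπ₁ s) fun a => ?_
    rw [qValue_sub_qValue]
    exact mul_le_mul_of_nonneg_left (sum_mul_le_of_mem_stdSimplex (hP s a) hM) hγ

end IsValueFunction

end ValueFunction

theorem stochastic_policy_robustness_certificate_general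
    {S A : Type*} [Fintype S] [Fintype A]
    (γ Rmax δ : ℝ) (hγ0 : 0 ≤ γ) (hγ1 : γ < 1) (hRmax : 0 ≤ Rmax)
    (r : S → A → ℝ) (hr0 : ∀ s a, 0 ≤ r s a) (hr1 : ∀ s a, r s a ≤ Rmax)
    (P : S → A → S → ℝ) (hP0 : ∀ s a s', 0 ≤ P s a s')
    (hP1 : ∀ s a, ∑ s', P s a s' = 1)
    (π₁ π₂ : S → A → ℝ)
    (hπ₁0 : ∀ s a, 0 ≤ π₁ s a) (hπ₁1 : ∀ s, ∑ a, π₁ s a = 1)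
    (hπ₂0 : ∀ s a, 0 ≤ π₂ s a) (hπ₂1 : ∀ s, ∑ a, π₂ s a = 1)
    (hclose : ∀ s, ∑ a, |π₁ s a - π₂ s a| ≤ δ)
    (V₁ V₂ : S → ℝ)
    (hV₁ : ∀ s, V₁ s = ∑ a, π₁ s a * (r s a + γ * ∑ s', P s a s' * V₁ s'))
    (hV₂ : ∀ s, V₂ s = ∑ a, π₂ s a * (r s a + γ * ∑ s', P s a s' * V₂ s')) :
    ∀ s, V₁ s - V₂ s ≤ δ * Rmax / (1 - γ) ^ 2 := by
  have hP : ∀ s a, P s a ∈ stdSimplex ℝ S := fun s a => ⟨hP0 s a, hP1 s a⟩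
  have hπ₁ : ∀ s, π₁ s ∈ stdSimplex ℝ A := fun s => ⟨hπ₁0 s, hπ₁1 s⟩
  have hπ₂ : ∀ s, π₂ s ∈ stdSimplex ℝ A := fun s => ⟨hπ₂0 s, hπ₂1 s⟩
  have hQ₂ := IsValueFunction.qValue_mem_Icc hV₂ hγ0 hγ1 hP hπ₂ hr0 hr1
  have hK : 0 ≤ Rmax / (1 - γ) := div_nonneg hRmax (sub_pos.2 hγ1).le
  intro s
  calc V₁ s - V₂ s ≤ δ * (Rmax / (1 - γ)) / (1 - γ) :=
        le_div_one_sub_of_forall_le_add_mul hγ1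
          (fun _ hM => IsValueFunction.sub_le_add_mul hV₁ hV₂ hγ0 hP hπ₁ hQ₂ hK hclose hM) s
    _ = δ * Rmax / (1 - γ) ^ 2 := by rw [mul_div_assoc, div_div, ← sq, mul_div_assoc]

/-- Robustness certificate for a stochastic policy: if the action distributions
of two stochastic policies are `δ`-close in `ℓ1` distance at every state, then
their value functions differ by at most `δ · R_max / (1 − γ)²`. -/
theorem stochastic_policy_robustness_certificate
    {S A : Type*} [Fintype S] [Fintype A] [Nonempty S] [Nonempty A]
    (γ Rmax δ : ℝ) (hγ0 : 0 ≤ γ) (hγ1 : γ < 1) (hRmax : 0 ≤ Rmax) (hδ : 0 ≤ δ)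
    (r : S → A → ℝ) (hr0 : ∀ s a, 0 ≤ r s a) (hr1 : ∀ s a, r s a ≤ Rmax)
    (P : S → A → S → ℝ) (hP0 : ∀ s a s', 0 ≤ P s a s')
    (hP1 : ∀ s a, ∑ s', P s a s' = 1)
    (π₁ π₂ : S → A → ℝ)
    (hπ₁0 : ∀ s a, 0 ≤ π₁ s a) (hπ₁1 : ∀ s, ∑ a, π₁ s a = 1)
    (hπ₂0 : ∀ s a, 0 ≤ π₂ s a) (hπ₂1 : ∀ s, ∑ a, π₂ s a = 1)
    (hclose : ∀ s, ∑ a, |π₁ s a - π₂ s a| ≤ δ)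
    (V₁ V₂ : S → ℝ)
    (hV₁ : ∀ s, V₁ s = ∑ a, π₁ s a * (r s a + γ * ∑ s', P s a s' * V₁ s'))
    (hV₂ : ∀ s, V₂ s = ∑ a, π₂ s a * (r s a + γ * ∑ s', P s a s' * V₂ s')) :
    ∀ s, V₁ s - V₂ s ≤ δ * Rmax / (1 - γ) ^ 2 :=
  stochastic_policy_robustness_certificate_general γ Rmax δ hγ0 hγ1 hRmax r hr0 hr1 P hP0 hP1 π₁ π₂
    hπ₁0 hπ₁1 hπ₂0 hπ₂1 hclose V₁ V₂ hV₁ hV₂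
end

section
/- Let S be a finite nonempty metric space with distance d_S and let A be a metric space with distance d_A. Let γ ∈ [0,1), R_max ≥ 0, L_r ≥ 0, L_P ≥ 0. Let r : S × A → ℝ satisfy |r(s,a) − r(s',a')| ≤ L_r (d_S(s,s') + d_A(a,a')) for all s,s' ∈ S and a,a' ∈ A, and let P : S × A → S → ℝ satisfy ∑_{s₁ ∈ S} |P(s₁|s,a) − P(s₁|s',a')| ≤ L_P (d_S(s,s') + d_A(a,a')). Let V : S → ℝ satisfy 0 ≤ V(s₁) ≤ R_max/(1−γ) for all s₁, and define Q : S × A → ℝ by Q(s,a) = r(s,a) + γ ∑_{s₁} P(s₁|s,a) V(s₁). Then for all s,s' ∈ S and a,a' ∈ A, |Q(s,a) − Q(s',a')| ≤ (L_r + γ R_max L_P/(1−γ)) (d_S(s,s') + d_A(a,a')). -/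
open Finset

/-! A change of the state-action pair moves `Q` through the reward, by at most `L_r`-times the
distance, and through the expected next-state value. The latter is a sum of `P`-differences
weighted by values of `V`, each bounded by `R_max/(1-γ)`, so it moves by at most `R_max/(1-γ)`
times the `ℓ1` distance of the transition rows, hence by `R_max L_P/(1-γ)` times the distance. -/

theorem abs_sum_mul_sub_sum_mul_le {ι R : Type*} [CommRing R] [LinearOrder R]
    [IsStrictOrderedRing R] (s : Finset ι) (p q v : ι → R) {M : R}
    (hv : ∀ i ∈ s, |v i| ≤ M) :
    |∑ i ∈ s, p i * v i - ∑ i ∈ s, q i * v i| ≤ M * ∑ i ∈ s, |p i - q i| := by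
  rw [← sum_sub_distrib, mul_sum]
  refine (abs_sum_le_sum_abs _ _).trans (sum_le_sum fun i hi => ?_)
  rw [← sub_mul, abs_mul, mul_comm]
  exact mul_le_mul_of_nonneg_right (hv i hi) (abs_nonneg _)

theorem q_function_lipschitz_general
    {S A : Type*} [MetricSpace S] [Fintype S] [MetricSpace A]
    (γ Rmax Lr LP : ℝ) (hγ0 : 0 ≤ γ)
    (r : S → A → ℝ)
    (hrLip : ∀ s s' : S, ∀ a a' : A,
      |r s a - r s' a'| ≤ Lr * (dist s s' + dist a a'))
    (P : S → A → S → ℝ)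
    (hPLip : ∀ s s' : S, ∀ a a' : A,
      ∑ s₁, |P s a s₁ - P s' a' s₁| ≤ LP * (dist s s' + dist a a'))
    (V : S → ℝ) (hV0 : ∀ s₁, 0 ≤ V s₁) (hV1 : ∀ s₁, V s₁ ≤ Rmax / (1 - γ))
    (Q : S → A → ℝ)
    (hQ : ∀ s a, Q s a = r s a + γ * ∑ s₁, P s a s₁ * V s₁) :
    ∀ s s' : S, ∀ a a' : A,
      |Q s a - Q s' a'| ≤
        (Lr + γ * Rmax * LP / (1 - γ)) * (dist s s' + dist a a') := by
  intro s s' a a'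
  set D := dist s s' + dist a a'
  set E := ∑ s₁, P s a s₁ * V s₁
  set E' := ∑ s₁, P s' a' s₁ * V s₁
  have hV : ∀ s₁, |V s₁| ≤ Rmax / (1 - γ) := fun s₁ =>
    (abs_of_nonneg (hV0 s₁)).trans_le (hV1 s₁)
  have hM : 0 ≤ Rmax / (1 - γ) := (hV0 s).trans (hV1 s)
  have hexpect : |E - E'| ≤ Rmax / (1 - γ) * (LP * D) :=
    (abs_sum_mul_sub_sum_mul_le _ _ _ _ fun s₁ _ => hV s₁).trans
      (mul_le_mul_of_nonneg_left (hPLip s s' a a') hM)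
  calc |Q s a - Q s' a'|
      = |(r s a - r s' a') + γ * (E - E')| := by rw [hQ, hQ]; congr 1; ring
    _ ≤ |r s a - r s' a'| + γ * |E - E'| :=
        (abs_add_le _ _).trans_eq (by rw [abs_mul, abs_of_nonneg hγ0])
    _ ≤ Lr * D + γ * (Rmax / (1 - γ) * (LP * D)) := by
        gcongr
        exact hrLip s s' a a'
    _ = (Lr + γ * Rmax * LP / (1 - γ)) * D := by ring

/-- Lipschitz continuity of the Q-function: if the reward is `L_r`-Lipschitz, the
transition kernel is `L_P`-Lipschitz in `ℓ1` distance, and the value estimate `V`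
takes values in `[0, R_max/(1−γ)]`, then the associated Q-function
`Q(s,a) = r(s,a) + γ ∑_{s₁} P(s₁|s,a) V(s₁)` is
`(L_r + γ R_max L_P/(1−γ))`-Lipschitz jointly in `(s,a)`. -/
theorem q_function_lipschitz
    {S A : Type*} [MetricSpace S] [Fintype S] [Nonempty S] [MetricSpace A]
    (γ Rmax Lr LP : ℝ) (hγ0 : 0 ≤ γ) (hγ1 : γ < 1) (hRmax : 0 ≤ Rmax)
    (hLr : 0 ≤ Lr) (hLP : 0 ≤ LP)
    (r : S → A → ℝ)
    (hrLip : ∀ s s' : S, ∀ a a' : A,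
      |r s a - r s' a'| ≤ Lr * (dist s s' + dist a a'))
    (P : S → A → S → ℝ)
    (hPLip : ∀ s s' : S, ∀ a a' : A,
      ∑ s₁, |P s a s₁ - P s' a' s₁| ≤ LP * (dist s s' + dist a a'))
    (V : S → ℝ) (hV0 : ∀ s₁, 0 ≤ V s₁) (hV1 : ∀ s₁, V s₁ ≤ Rmax / (1 - γ))
    (Q : S → A → ℝ)
    (hQ : ∀ s a, Q s a = r s a + γ * ∑ s₁, P s a s₁ * V s₁) :
    ∀ s s' : S, ∀ a a' : A,
      |Q s a - Q s' a'| ≤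
        (Lr + γ * Rmax * LP / (1 - γ)) * (dist s s' + dist a a') :=
  q_function_lipschitz_general γ Rmax Lr LP hγ0 r hrLip P hPLip V hV0 hV1 Q hQ
end

section
/- Let m ≥ 1 and define softmax : ℝ^m → ℝ^m by softmax(x)_i = exp(x_i) / ∑_{j=1}^m exp(x_j). Then for all x, y ∈ ℝ^m, (1/2) ∑_{i=1}^m |softmax(x)_i − softmax(y)_i| ≤ (m/2) · ∑_{j=1}^m |x_j − y_j|. -/
/-- The softmax function, mapping `ℝ^m` to the probability simplex. -/
noncomputable def softmax {m : ℕ} (x : Fin m → ℝ) : Fin m → ℝ :=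
  fun i => Real.exp (x i) / ∑ j : Fin m, Real.exp (x j)

/-!
Each coordinate of softmax is 1-Lipschitz for `‖·‖₁`. Writing `d = x - y`, the ratio
`softmax x i / softmax y i = ∑ⱼ exp (yⱼ + dᵢ) / ∑ⱼ exp (yⱼ + dⱼ)` lies in `[e^{-S}, e^S]` with
`S = ‖d‖₁`, since every `|dᵢ - dⱼ| ≤ S`. Two numbers in `[0, 1]` whose ratio is within `e^{±S}`
differ by at most `1 - e^{-S} ≤ S`; summing the `m` coordinates gives the bound.
-/

open Finset Real

lemma abs_sub_le_sum_abs {ι α : Type*} [Fintype ι] [AddCommGroup α] [LinearOrder α]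
    [IsOrderedAddMonoid α] (d : ι → α) (i j : ι) : |d i - d j| ≤ ∑ k, |d k| := by
  rcases eq_or_ne i j with rfl | hij
  · simpa using sum_nonneg fun k _ => abs_nonneg (d k)
  · exact (abs_sub _ _).trans (add_le_sum (fun k _ => abs_nonneg (d k)) (mem_univ i)
      (mem_univ j) hij)

lemma abs_sub_le_max_mul_of_le_exp_mul {a b s : ℝ} (ha : 0 ≤ a) (hb : 0 ≤ b)
    (hab : a ≤ exp s * b) (hba : b ≤ exp s * a) : |a - b| ≤ max a b * s := by
  wlog hba' : b ≤ a generalizing a b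
  · rw [abs_sub_comm, max_comm]
    exact this hb ha hba hab (le_of_not_ge hba')
  have hb_lower : exp (-s) * a ≤ b := by
    calc exp (-s) * a ≤ exp (-s) * (exp s * b) := by gcongr
      _ = b := by rw [← mul_assoc, ← exp_add, neg_add_cancel, exp_zero, one_mul]
  rw [abs_of_nonneg (sub_nonneg.2 hba'), max_eq_left hba']
  nlinarith [mul_nonneg ha (sub_nonneg.2 (one_sub_le_exp_neg s))]

section Softmax

variable {m : ℕ}

lemma softmax_nonneg (x : Fin m → ℝ) (i : Fin m) : 0 ≤ softmax x i := by
  unfold softmax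
  positivity

lemma sum_exp_pos (x : Fin m → ℝ) (i : Fin m) : 0 < ∑ j, exp (x j) :=
  sum_pos (fun j _ => exp_pos (x j)) ⟨i, mem_univ i⟩

lemma softmax_le_one (x : Fin m → ℝ) (i : Fin m) : softmax x i ≤ 1 :=
  (div_le_one (sum_exp_pos x i)).2 <|
    single_le_sum (f := fun j => exp (x j)) (fun _ _ => (exp_pos _).le) (mem_univ i)

lemma softmax_le_exp_mul_softmax (x y : Fin m → ℝ) (i : Fin m) :
    softmax x i ≤ exp (∑ j, |x j - y j|) * softmax y i := by
  unfold softmax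
  rw [mul_div_assoc', div_le_div_iff₀ (sum_exp_pos x i) (sum_exp_pos y i), mul_sum, mul_sum]
  refine sum_le_sum fun j _ => ?_
  rw [← exp_add, ← exp_add, ← exp_add, exp_le_exp]
  have := (le_abs_self _).trans (abs_sub_le_sum_abs (fun k => x k - y k) i j)
  linarith

lemma abs_softmax_sub_softmax_le (x y : Fin m → ℝ) (i : Fin m) :
    |softmax x i - softmax y i| ≤ ∑ j, |x j - y j| := by
  have hyx : softmax y i ≤ exp (∑ j, |x j - y j|) * softmax x i := by
    simpa only [abs_sub_comm] using softmax_le_exp_mul_softmax y x i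
  calc |softmax x i - softmax y i|
      ≤ max (softmax x i) (softmax y i) * ∑ j, |x j - y j| :=
        abs_sub_le_max_mul_of_le_exp_mul (softmax_nonneg x i) (softmax_nonneg y i)
          (softmax_le_exp_mul_softmax x y i) hyx
    _ ≤ 1 * ∑ j, |x j - y j| := by
        gcongr
        exact max_le (softmax_le_one x i) (softmax_le_one y i)
    _ = ∑ j, |x j - y j| := one_mul _

end Softmax

theorem softmax_tv_lipschitz_general (m : ℕ) :
    ∀ x y : Fin m → ℝ,
      (1 / 2) * ∑ i : Fin m, |softmax x i - softmax y i|
        ≤ ((m : ℝ) / 2) * ∑ j : Fin m, |x j - y j| := by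
  intro x y
  calc (1 / 2) * ∑ i : Fin m, |softmax x i - softmax y i|
      ≤ (1 / 2) * ∑ _i : Fin m, ∑ j : Fin m, |x j - y j| := by
        gcongr with i
        exact abs_softmax_sub_softmax_le x y i
    _ = ((m : ℝ) / 2) * ∑ j : Fin m, |x j - y j| := by
        rw [sum_const, card_univ, Fintype.card_fin, nsmul_eq_mul]
        ring

/-- Lipschitz bound for softmax: the total variation distance between
`softmax(x)` and `softmax(y)` is at most `(m/2)` times `‖x − y‖_1`. -/
theorem softmax_tv_lipschitz (m : ℕ) (hm : 1 ≤ m) :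
    ∀ x y : Fin m → ℝ,
      (1 / 2) * ∑ i : Fin m, |softmax x i - softmax y i|
        ≤ ((m : ℝ) / 2) * ∑ j : Fin m, |x j - y j| :=
  softmax_tv_lipschitz_general m
end
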